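/- Fix integers r ≥ 3 and d ≥ 2. With respect to the graded reverse lexicographic order > with a_1 > ⋯ > a_d > e_1 > ⋯ > e_{2r−2} > b_1 > ⋯ > b_d, the initial ideal in(I_{G_{r,d}}) of the toric ideal I_{G_{r,d}} is the monomial ideal generated by F_d ∪ H_{r,d} = {a_i b_j : 1 ≤ j < i ≤ d} ∪ {a_i e_2 e_4 ⋯ e_{2r−2} : 1 ≤ i ≤ d}. -/

import Mathlib

open MvPolynomial

/-- The vertices of the graph `G_{r,d}`: `x₁, x₂`, the `y`-vertices `y_1, …, y_d`
(`Vert.y i` is `y_{i+1}`), and the path vertices `z_1, …, z_{2r-3}`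
(`Vert.z j` is `z_{j+1}`). -/
inductive Vert (d r : ℕ) : Type where
  | x1 : Vert d r
  | x2 : Vert d r
  | y : Fin d → Vert d r
  | z : Fin (2 * r - 3) → Vert d r
deriving DecidableEq

/-- The edge variables of `G_{r,d}`: `a_1, …, a_d`, `b_1, …, b_d` and
`e_1, …, e_{2r-2}` (0-indexed: `EVar.a i` is `a_{i+1}`, etc.). -/
inductive EVar (d r : ℕ) : Type where
  | a : Fin d → EVar d r
  | b : Fin d → EVar d r
  | e : Fin (2 * r - 2) → EVar d r
deriving DecidableEq

/-- The image of each edge variable of `G_{r,d}` under `φ_G`: the product of the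
variables of the two endpoints of the corresponding edge.  Here
`a_i = {x₁, y_i}`, `b_i = {x₂, y_i}`, `e_1 = {x₁, z_1}`,
`e_j = {z_{j-1}, z_j}` for `2 ≤ j ≤ 2r-3` and `e_{2r-2} = {z_{2r-3}, x₂}`. -/
noncomputable def edgeImage (k : Type) [Field k] (d r : ℕ) :
    EVar d r → MvPolynomial (Vert d r) k
  | .a i => X Vert.x1 * X (Vert.y i)
  | .b i => X Vert.x2 * X (Vert.y i)
  | .e t =>
      (if h : t.val = 0 then X Vert.x1
        else X (Vert.z ⟨t.val - 1, by have := t.isLt; omega⟩)) *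
      (if h : t.val = 2 * r - 3 then X Vert.x2
        else X (Vert.z ⟨t.val, by have := t.isLt; omega⟩))

/-- The toric ideal `I_{G_{r,d}}` of the graph `G_{r,d}`, viewed in the polynomial
ring `k[a_1,…,a_d,b_1,…,b_d,e_1,…,e_{2r-2}]`: the kernel of the `k`-algebra map
`φ : k[a_1,…,e_{2r-2}] → k[x₁,x₂,y_1,…,y_d,z_1,…,z_{2r-3}]` sending each edge
variable to the product of its endpoint variables. -/
noncomputable def toricIdealGrd (k : Type) [Field k] (d r : ℕ) :
    Ideal (MvPolynomial (EVar d r) k) :=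
  RingHom.ker (MvPolynomial.aeval (edgeImage k d r)).toRingHom

/-- The monomial `e_2 e_4 ⋯ e_{2r-2}` (product of the even-indexed `e`-variables;
in the 0-indexed encoding these are the `EVar.e t` with `t.val` odd). -/
noncomputable def evenEProd (k : Type) [Field k] (d r : ℕ) : MvPolynomial (EVar d r) k :=
  ∏ t ∈ Finset.univ.filter (fun t : Fin (2 * r - 2) => t.val % 2 = 1), X (EVar.e t)

/-- The monomial `e_1 e_3 ⋯ e_{2r-3}` (product of the odd-indexed `e`-variables;
in the 0-indexed encoding these are the `EVar.e t` with `t.val` even). -/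
noncomputable def oddEProd (k : Type) [Field k] (d r : ℕ) : MvPolynomial (EVar d r) k :=
  ∏ t ∈ Finset.univ.filter (fun t : Fin (2 * r - 2) => t.val % 2 = 0), X (EVar.e t)

open MvPolynomial

/-- Total degree of an exponent vector. -/
def expDeg {σ : Type} (μ : σ →₀ ℕ) : ℕ := μ.sum fun _ n => n

/-- The graded reverse lexicographic order on exponent vectors, determined by a
rank function `rk` on the variables (`rk x < rk y` means `x > y` as variables).
`grevlexLT rk μ ν` holds iff `μ < ν` in grevlex: either `μ` has smaller total
degree, or the degrees agree and at the smallest variable (largest rank) where the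
exponents differ, `μ` has the *larger* exponent. -/
def grevlexLT {σ : Type} (rk : σ → ℕ) (μ ν : σ →₀ ℕ) : Prop :=
  expDeg μ < expDeg ν ∨
    (expDeg μ = expDeg ν ∧ ∃ x, ν x < μ x ∧ ∀ y, rk x < rk y → μ y = ν y)

/-- The initial ideal of `I` with respect to the monomial order `grevlexLT rk`:
the ideal generated by the leading monomials of the nonzero elements of `I`. -/
noncomputable def initialIdeal {σ k : Type} [Field k] (rk : σ → ℕ)
    (I : Ideal (MvPolynomial σ k)) : Ideal (MvPolynomial σ k) :=
  Ideal.span {p | ∃ f ∈ I, f ≠ 0 ∧ ∃ μ ∈ f.support,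
    (∀ ν ∈ f.support, ν ≠ μ → grevlexLT rk ν μ) ∧ p = (monomial μ (1 : k))}

/-- The rank function realizing the variable order
`a_1 > ⋯ > a_d > e_1 > ⋯ > e_{2r-2} > b_1 > ⋯ > b_d` (smaller rank = larger variable). -/
def rankGrd (d r : ℕ) : EVar d r → ℕ
  | .a i => i.val
  | .e t => d + t.val
  | .b i => d + (2 * r - 2) + i.val

/-!
Both kinds of generators are leading terms of binomials of the toric ideal:
`a_i b_j - a_j b_i` and `a_i e_2 e_4 ⋯ e_{2r-2} - b_i e_1 e_3 ⋯ e_{2r-3}`.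
Conversely, a polynomial in the kernel of the monomial map `φ` contains, along with each of its
monomials `x^μ`, another monomial `x^ν` with the same image, i.e. with the same vertex degrees.
If no generator divides `x^μ`, comparing vertex degrees along the path `x₁ z₁ ⋯ z_{2r-3} x₂`
(where the differences of the `e`-exponents alternate in sign) and at `x₁` and the `y_i` shows
that `x^μ < x^ν`, the comparison being decided at `b_J` for the largest `J` at which the
`a`-exponents differ. So `x^μ` is not a leading monomial.
-/

section GrevLex

variable {σ : Type} {rk : σ → ℕ}

theorem expDeg_eq_degree (μ : σ →₀ ℕ) : expDeg μ = μ.degree := rfl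

theorem grevlexLT_irrefl (μ : σ →₀ ℕ) : ¬grevlexLT rk μ μ := by
  rintro (h | ⟨-, x, hx, -⟩) <;> omega

theorem grevlexLT_asymm (hrk : Function.Injective rk) {μ ν : σ →₀ ℕ}
    (h : grevlexLT rk μ ν) : ¬grevlexLT rk ν μ := by
  rintro (h' | ⟨hdeg', y, hy, hy'⟩)
  · rcases h with h | ⟨hdeg, -⟩ <;> omega
  obtain h | ⟨-, x, hx, hx'⟩ := h
  · omega
  rcases lt_trichotomy (rk x) (rk y) with hxy | hxy | hxy
  · have := hx' y hxy; omega
  · cases hrk hxy; omega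
  · have := hy' x hxy; omega

theorem monomial_mem_initialIdeal {k : Type} [Field k] {I : Ideal (MvPolynomial σ k)}
    {μ ν : σ →₀ ℕ} (hlt : grevlexLT rk ν μ) (hI : monomial μ (1 : k) - monomial ν 1 ∈ I) :
    monomial μ (1 : k) ∈ initialIdeal rk I := by
  classical
  have hne : ν ≠ μ := by rintro rfl; exact grevlexLT_irrefl ν hlt
  have hcoeff : ∀ η, coeff η (monomial μ (1 : k) - monomial ν 1) =
      (if μ = η then 1 else 0) - if ν = η then 1 else 0 := fun η => by
    rw [coeff_sub, coeff_monomial, coeff_monomial]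
  have hμ : coeff μ (monomial μ (1 : k) - monomial ν 1) ≠ 0 := by simp [hcoeff, hne]
  refine Ideal.subset_span ⟨_, hI, ne_of_apply_ne (coeff μ) (by simpa using hμ), μ,
    mem_support_iff.mpr hμ, fun η hη hημ => ?_, rfl⟩
  obtain rfl : ν = η := by
    by_contra h
    simp [hcoeff, Ne.symm hημ, h] at hη
  exact hlt

end GrevLex

section MonomialMap

variable {σ τ R : Type*} [CommSemiring R] (w : σ → τ →₀ ℕ)

theorem aeval_monomial_eq_monomial_linearCombination (μ : σ →₀ ℕ) (c : R) :
    aeval (fun x => monomial (w x) (1 : R)) (monomial μ c) =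
      monomial (Finsupp.linearCombination ℕ w μ) c := by
  rw [aeval_monomial, Finsupp.linearCombination_apply, monomial_finsupp_sum_index]
  simp [monomial_pow]

theorem exists_ne_linearCombination_eq_of_aeval_eq_zero {f : MvPolynomial σ R}
    (hf : aeval (fun x => monomial (w x) (1 : R)) f = 0) {μ : σ →₀ ℕ} (hμ : μ ∈ f.support) :
    ∃ ν ∈ f.support, ν ≠ μ ∧
      Finsupp.linearCombination ℕ w ν = Finsupp.linearCombination ℕ w μ := by
  classical
  by_contra! h
  apply mem_support_iff.mp hμ
  have := congrArg (coeff (Finsupp.linearCombination ℕ w μ)) hf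
  rw [f.as_sum, map_sum, coeff_sum, Finset.sum_eq_single μ] at this
  · rwa [aeval_monomial_eq_monomial_linearCombination, coeff_monomial, if_pos rfl] at this
  · intro ν hν hne
    rw [aeval_monomial_eq_monomial_linearCombination, coeff_monomial, if_neg (h ν hν hne)]
  · exact fun h => (h hμ).elim

theorem degree_linearCombination {n : ℕ} (hw : ∀ x, (w x).degree = n) (μ : σ →₀ ℕ) :
    (Finsupp.linearCombination ℕ w μ).degree = n * μ.degree := by
  induction μ using Finsupp.induction_linear with
  | zero => simp
  | add f g hf hg => simp [hf, hg, mul_add]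
  | single x m => simp [hw, mul_comm]

theorem prod_X_dvd_monomial {s : Finset σ} {μ : σ →₀ ℕ} (h : ∀ x ∈ s, μ x ≠ 0) :
    ∏ x ∈ s, X x ∣ monomial μ (1 : R) := by
  rw [← prod_X_pow_eq_monomial]
  calc ∏ x ∈ s, (X x : MvPolynomial σ R)
      ∣ ∏ x ∈ s, X x ^ μ x :=
        Finset.prod_dvd_prod_of_dvd _ _ fun x hx => dvd_pow_self _ (h x hx)
    _ ∣ ∏ x ∈ μ.support, X x ^ μ x :=
      Finset.prod_dvd_prod_of_subset _ _ _ fun x hx => Finsupp.mem_support_iff.mpr (h x hx)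

end MonomialMap

theorem Fin.sub_eq_neg_one_pow_mul_of_add_eq {N : ℕ} {u v : Fin N → ℤ}
    (h : ∀ n (hn : n + 1 < N),
      u ⟨n, by omega⟩ + u ⟨n + 1, hn⟩ = v ⟨n, by omega⟩ + v ⟨n + 1, hn⟩)
    (t : Fin N) : u t - v t = (-1) ^ t.val * (u ⟨0, t.pos⟩ - v ⟨0, t.pos⟩) := by
  obtain ⟨n, hn⟩ := t
  induction n with
  | zero => simp
  | succ n ih =>
    have := h n hn
    have := ih (by omega)
    rw [pow_succ]
    linarith

theorem rankGrd_injective {d r : ℕ} : Function.Injective (rankGrd d r) := by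
  rintro (i | i | t) (j | j | s) h <;>
    simp only [rankGrd, EVar.a.injEq, EVar.b.injEq, EVar.e.injEq, reduceCtorEq, Fin.ext_iff]
      at h ⊢ <;>
    omega

namespace Grd

variable {k : Type} [Field k] {d r : ℕ}

noncomputable def edgeIncidence (d r : ℕ) : EVar d r → Vert d r →₀ ℕ
  | .a i => Finsupp.single .x1 1 + Finsupp.single (.y i) 1
  | .b i => Finsupp.single .x2 1 + Finsupp.single (.y i) 1
  | .e t =>
      Finsupp.single (if h : t.val = 0 then .x1
        else .z ⟨t.val - 1, by have := t.isLt; omega⟩) 1 +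
      Finsupp.single (if h : t.val = 2 * r - 3 then .x2
        else .z ⟨t.val, by have := t.isLt; omega⟩) 1

noncomputable def vertexDegrees (d r : ℕ) : (EVar d r →₀ ℕ) →ₗ[ℕ] Vert d r →₀ ℕ :=
  Finsupp.linearCombination ℕ (edgeIncidence d r)

theorem edgeImage_eq_monomial :
    edgeImage k d r = fun x => monomial (edgeIncidence d r x) 1 := by
  funext x
  cases x with
  | a i => simp [edgeImage, edgeIncidence, X, monomial_mul]
  | b i => simp [edgeImage, edgeIncidence, X, monomial_mul]
  | e t => simp only [edgeImage, edgeIncidence]; split_ifs <;> simp [X, monomial_mul]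

theorem mem_toricIdealGrd {f : MvPolynomial (EVar d r) k} :
    f ∈ toricIdealGrd k d r ↔
      aeval (fun x => monomial (edgeIncidence d r x) (1 : k)) f = 0 := by
  rw [toricIdealGrd, RingHom.mem_ker, ← edgeImage_eq_monomial]
  rfl

theorem monomial_sub_monomial_mem_toricIdealGrd {μ ν : EVar d r →₀ ℕ}
    (h : vertexDegrees d r μ = vertexDegrees d r ν) :
    monomial μ (1 : k) - monomial ν 1 ∈ toricIdealGrd k d r := by
  rw [mem_toricIdealGrd, map_sub, aeval_monomial_eq_monomial_linearCombination,
    aeval_monomial_eq_monomial_linearCombination]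
  exact sub_eq_zero.mpr (congrArg (monomial · 1) h)

theorem expDeg_eq_of_vertexDegrees_eq {μ ν : EVar d r →₀ ℕ}
    (h : vertexDegrees d r μ = vertexDegrees d r ν) : expDeg μ = expDeg ν := by
  have hdeg : ∀ x, (edgeIncidence d r x).degree = 2 := by
    intro x
    cases x with
    | e t => simp only [edgeIncidence, map_add, Finsupp.degree_single]
    | _ => simp [edgeIncidence]
  have := congrArg Finsupp.degree h
  simp only [vertexDegrees, degree_linearCombination _ hdeg] at this
  simpa [expDeg_eq_degree] using this

theorem vertexDegrees_y (μ : EVar d r →₀ ℕ) (i : Fin d) :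
    vertexDegrees d r μ (.y i) = μ (.a i) + μ (.b i) := by
  induction μ using Finsupp.induction_linear with
  | zero => simp
  | add f g hf hg => simp only [map_add, Finsupp.add_apply, hf, hg]; ring
  | single x n =>
    cases x with
    | e t =>
      simp only [vertexDegrees, Finsupp.linearCombination_single, edgeIncidence]
      split_ifs <;> simp
    | _ => simp [vertexDegrees, edgeIncidence, Finsupp.single_apply, eq_comm]

theorem vertexDegrees_x1 (hr : 3 ≤ r) (μ : EVar d r →₀ ℕ) :
    vertexDegrees d r μ .x1 = ∑ i, μ (.a i) + μ (.e ⟨0, by omega⟩) := by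
  induction μ using Finsupp.induction_linear with
  | zero => simp
  | add f g hf hg =>
    simp only [map_add, Finsupp.add_apply, hf, hg, Finset.sum_add_distrib]
    ring
  | single x n =>
    cases x with
    | e t =>
      simp only [vertexDegrees, Finsupp.linearCombination_single, edgeIncidence]
      split_ifs <;> simp [Finsupp.single_apply, Fin.ext_iff] <;> omega
    | _ => simp [vertexDegrees, edgeIncidence, Finsupp.single_apply]

theorem vertexDegrees_x2 (hr : 3 ≤ r) (μ : EVar d r →₀ ℕ) :
    vertexDegrees d r μ .x2 = ∑ i, μ (.b i) + μ (.e ⟨2 * r - 3, by omega⟩) := by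
  induction μ using Finsupp.induction_linear with
  | zero => simp
  | add f g hf hg =>
    simp only [map_add, Finsupp.add_apply, hf, hg, Finset.sum_add_distrib]
    ring
  | single x n =>
    cases x with
    | e t =>
      simp only [vertexDegrees, Finsupp.linearCombination_single, edgeIncidence]
      split_ifs <;> simp [Finsupp.single_apply, Fin.ext_iff] <;> omega
    | _ => simp [vertexDegrees, edgeIncidence, Finsupp.single_apply]

theorem vertexDegrees_z (μ : EVar d r →₀ ℕ) (s : Fin (2 * r - 3)) :
    vertexDegrees d r μ (.z s) =
      μ (.e ⟨s.val, by omega⟩) + μ (.e ⟨s.val + 1, by omega⟩) := by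
  induction μ using Finsupp.induction_linear with
  | zero => simp
  | add f g hf hg => simp only [map_add, Finsupp.add_apply, hf, hg]; ring
  | single x n =>
    cases x with
    | e t =>
      simp only [vertexDegrees, Finsupp.linearCombination_single, edgeIncidence]
      split_ifs <;> simp [Finsupp.single_apply, Fin.ext_iff] <;> (try split_ifs) <;> omega
    | _ => simp [vertexDegrees, edgeIncidence]

/-- Neither `a_i b_j` (`j < i`) nor `a_i e_2 e_4 ⋯ e_{2r-2}` divides `x^μ`. -/
def IsStandard (μ : EVar d r →₀ ℕ) : Prop :=
  (∀ i j : Fin d, j < i → μ (.a i) = 0 ∨ μ (.b j) = 0) ∧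
    ∀ i : Fin d, μ (.a i) ≠ 0 → ∃ t : Fin (2 * r - 2), t.val % 2 = 1 ∧ μ (.e t) = 0

def generators (k : Type) [Field k] (d r : ℕ) : Set (MvPolynomial (EVar d r) k) :=
  {p | ∃ i j : Fin d, j < i ∧ p = X (EVar.a i) * X (EVar.b j)} ∪
    {p | ∃ i : Fin d, p = X (EVar.a i) * evenEProd k d r}

theorem monomial_mem_span_generators_of_not_isStandard {μ : EVar d r →₀ ℕ}
    (hμ : ¬IsStandard μ) : monomial μ (1 : k) ∈ Ideal.span (generators k d r) := by
  simp only [IsStandard, not_and_or] at hμ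
  push Not at hμ
  rcases hμ with ⟨i, j, hij, hi, hj⟩ | ⟨i, hi, he⟩
  · refine Ideal.mem_of_dvd _ ?_ (Ideal.subset_span (Or.inl ⟨i, j, hij, rfl⟩))
    have := prod_X_dvd_monomial (R := k) (s := {.a i, .b j}) (μ := μ) (by simp [hi, hj])
    rwa [Finset.prod_pair (by simp)] at this
  · refine Ideal.mem_of_dvd _ ?_ (Ideal.subset_span (Or.inr ⟨i, rfl⟩))
    have := prod_X_dvd_monomial (R := k) (μ := μ)
      (s := insert (.a i) ((Finset.univ.filter fun t : Fin (2 * r - 2) => t.val % 2 = 1).map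
        ⟨EVar.e, fun _ _ h => EVar.e.inj h⟩)) (by
        simp only [Finset.forall_mem_insert, Finset.forall_mem_map]
        exact ⟨hi, fun t ht => he t (Finset.mem_filter.mp ht).2⟩)
    rwa [Finset.prod_insert (by simp), Finset.prod_map] at this

theorem sub_e_eq_of_vertexDegrees_eq {μ ν : EVar d r →₀ ℕ}
    (hW : vertexDegrees d r μ = vertexDegrees d r ν) (t : Fin (2 * r - 2)) :
    (μ (.e t) : ℤ) - ν (.e t) =
      (-1) ^ t.val * ((μ (.e ⟨0, t.pos⟩) : ℤ) - ν (.e ⟨0, t.pos⟩)) := by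
  refine Fin.sub_eq_neg_one_pow_mul_of_add_eq (u := fun t => (μ (.e t) : ℤ))
    (v := fun t => (ν (.e t) : ℤ)) (fun n hn => ?_) t
  have := DFunLike.congr_fun hW (.z ⟨n, by omega⟩)
  rw [vertexDegrees_z, vertexDegrees_z] at this
  exact_mod_cast this

theorem sum_a_add_e_zero_eq_of_vertexDegrees_eq (hr : 3 ≤ r) {μ ν : EVar d r →₀ ℕ}
    (hW : vertexDegrees d r μ = vertexDegrees d r ν) :
    ∑ i, μ (.a i) + μ (.e ⟨0, by omega⟩) = ∑ i, ν (.a i) + ν (.e ⟨0, by omega⟩) := by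
  rw [← vertexDegrees_x1 hr, ← vertexDegrees_x1 hr, hW]

theorem eq_of_vertexDegrees_eq_of_forall_a_eq (hr : 3 ≤ r) {μ ν : EVar d r →₀ ℕ}
    (hW : vertexDegrees d r μ = vertexDegrees d r ν) (ha : ∀ i, μ (.a i) = ν (.a i)) :
    μ = ν := by
  have he₀ := sum_a_add_e_zero_eq_of_vertexDegrees_eq hr hW
  simp only [ha, add_right_inj] at he₀
  ext (i | i | t)
  · exact ha i
  · have := DFunLike.congr_fun hW (.y i)
    rw [vertexDegrees_y, vertexDegrees_y, ha] at this
    omega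
  · have := sub_e_eq_of_vertexDegrees_eq hW t
    rw [he₀, sub_self, mul_zero] at this
    omega

theorem IsStandard.e_zero_le (hr : 3 ≤ r) {μ ν : EVar d r →₀ ℕ} (hμ : IsStandard μ)
    (hW : vertexDegrees d r μ = vertexDegrees d r ν) :
    ν (.e ⟨0, by omega⟩) ≤ μ (.e ⟨0, by omega⟩) := by
  by_contra! hlt
  have hx₁ := sum_a_add_e_zero_eq_of_vertexDegrees_eq hr hW
  obtain ⟨i, -, hi⟩ : ∃ i ∈ Finset.univ, ν (.a i) < μ (.a i) :=
    Finset.exists_lt_of_sum_lt (by omega)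
  obtain ⟨t, ht, hzero⟩ := hμ.2 i (by omega)
  have := sub_e_eq_of_vertexDegrees_eq hW t
  rw [hzero, Odd.neg_one_pow (Nat.odd_iff.mpr ht)] at this
  omega

theorem IsStandard.grevlexLT (hr : 3 ≤ r) {μ ν : EVar d r →₀ ℕ} (hμ : IsStandard μ)
    (hW : vertexDegrees d r μ = vertexDegrees d r ν) (hne : μ ≠ ν) :
    grevlexLT (rankGrd d r) μ ν := by
  have hy : ∀ i, μ (.a i) + μ (.b i) = ν (.a i) + ν (.b i) := fun i => by
    rw [← vertexDegrees_y, ← vertexDegrees_y, hW]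
  have hx₁ := sum_a_add_e_zero_eq_of_vertexDegrees_eq hr hW
  have he₀ := hμ.e_zero_le hr hW
  obtain ⟨J, hJ, hJmax⟩ : ∃ J, μ (.a J) ≠ ν (.a J) ∧ ∀ j, μ (.a j) ≠ ν (.a j) → j ≤ J := by
    have hS : (Finset.univ.filter fun i => μ (.a i) ≠ ν (.a i)).Nonempty := by
      by_contra! h
      refine hne (eq_of_vertexDegrees_eq_of_forall_a_eq hr hW fun i => ?_)
      simpa using Finset.filter_eq_empty_iff.mp h (Finset.mem_univ i)
    obtain ⟨J, hJ, hmax⟩ := Finset.exists_max_image _ id hS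
    exact ⟨J, (Finset.mem_filter.mp hJ).2, fun j hj => hmax j (by simpa using hj)⟩
  -- `a_J b_j` with `j < J` would divide `x^μ` otherwise
  have hlt : μ (.a J) < ν (.a J) := by
    by_contra! hle
    obtain ⟨j, hj⟩ : ∃ j, μ (.a j) < ν (.a j) := by
      by_contra! h
      have := Finset.sum_lt_sum (fun j _ => h j)
        ⟨J, Finset.mem_univ J, lt_of_le_of_ne hle hJ.symm⟩
      omega
    have hjJ : j < J := lt_of_le_of_ne (hJmax j hj.ne) (by rintro rfl; omega)
    have := hy j
    rcases hμ.1 J j hjJ with h | h <;> omega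
  refine Or.inr ⟨expDeg_eq_of_vertexDegrees_eq hW, .b J, by have := hy J; omega, ?_⟩
  rintro (j | j | t) hrk <;> simp only [rankGrd] at hrk
  · omega
  · have := hy j
    have := mt (hJmax j) (by simp only [not_le, Fin.lt_def]; omega)
    omega
  · omega

theorem monomial_mem_initialIdeal_of_vertexDegrees_eq {μ ν : EVar d r →₀ ℕ}
    (hW : vertexDegrees d r μ = vertexDegrees d r ν) (x : EVar d r) (hx : μ x < ν x)
    (hgt : ∀ y, rankGrd d r x < rankGrd d r y → μ y = ν y) :
    monomial μ (1 : k) ∈ initialIdeal (rankGrd d r) (toricIdealGrd k d r) :=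
  monomial_mem_initialIdeal
    (Or.inr ⟨(expDeg_eq_of_vertexDegrees_eq hW).symm, x, hx, fun y hy => (hgt y hy).symm⟩)
    (monomial_sub_monomial_mem_toricIdealGrd hW)

theorem X_a_mul_X_b_mem_initialIdeal {i j : Fin d} (hij : j < i) :
    X (.a i) * X (.b j) ∈ initialIdeal (rankGrd d r) (toricIdealGrd k d r) := by
  rw [X, X, monomial_mul, one_mul]
  refine monomial_mem_initialIdeal_of_vertexDegrees_eq
    (ν := Finsupp.single (.a j) 1 + Finsupp.single (.b i) 1) ?_ (.b i) ?_ ?_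
  · simp only [vertexDegrees, map_add, Finsupp.linearCombination_single, one_smul, edgeIncidence]
    abel
  · simp [hij.ne]
  · rintro (l | l | t) hrk <;> simp only [rankGrd] at hrk
    · omega
    · have hil : i ≠ l := by rintro rfl; omega
      have hjl : j ≠ l := by rintro rfl; omega
      simp [hil, hjl]
    · omega

theorem X_a_mul_evenEProd_mem_initialIdeal (hr : 3 ≤ r) (i : Fin d) :
    X (.a i) * evenEProd k d r ∈ initialIdeal (rankGrd d r) (toricIdealGrd k d r) := by
  simp only [evenEProd, X, ← monomial_sum_one, monomial_mul, one_mul]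
  refine monomial_mem_initialIdeal_of_vertexDegrees_eq
    (ν := Finsupp.single (.b i) 1 +
      ∑ t ∈ Finset.univ.filter (fun t : Fin (2 * r - 2) => t.val % 2 = 0), Finsupp.single (.e t) 1)
    ?_ (.b i) ?_ ?_
  · ext (_ | _ | l | s)
    · simp [vertexDegrees_x1 hr, Finsupp.single_apply]
    · simp [vertexDegrees_x2 hr, Finsupp.single_apply]; split_ifs <;> omega
    · simp [vertexDegrees_y, Finsupp.single_apply]
    · simp [vertexDegrees_z, Finsupp.single_apply, Finset.sum_add_distrib, Finset.sum_ite_eq']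
      split_ifs <;> omega
  · simp
  · rintro (l | l | t) hrk <;> simp only [rankGrd] at hrk
    · omega
    · have hil : i ≠ l := by rintro rfl; omega
      simp [hil]
    · omega

end Grd

theorem initial_ideal_Grd_general (k : Type) [Field k] (d r : ℕ) (hr : 3 ≤ r) :
    initialIdeal (rankGrd d r) (toricIdealGrd k d r) =
      Ideal.span
        ({p | ∃ i j : Fin d, j < i ∧ p = X (EVar.a i) * X (EVar.b j)} ∪
         {p | ∃ i : Fin d, p = X (EVar.a i) * evenEProd k d r}) := by
  apply le_antisymm
  · refine Ideal.span_le.mpr ?_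
    rintro _ ⟨f, hf, -, μ, hμ, hlead, rfl⟩
    by_cases hstd : Grd.IsStandard μ
    · obtain ⟨ν, hν, hne, hW⟩ := exists_ne_linearCombination_eq_of_aeval_eq_zero _
        (Grd.mem_toricIdealGrd.mp hf) hμ
      exact (grevlexLT_asymm rankGrd_injective (hstd.grevlexLT hr hW.symm hne.symm)
        (hlead ν hν hne)).elim
    · exact Grd.monomial_mem_span_generators_of_not_isStandard hstd
  · refine Ideal.span_le.mpr ?_
    rintro _ (⟨i, j, hij, rfl⟩ | ⟨i, rfl⟩)
    · exact Grd.X_a_mul_X_b_mem_initialIdeal hij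
    · exact Grd.X_a_mul_evenEProd_mem_initialIdeal hr i

/-- For `r ≥ 3` and `d ≥ 2`, with respect to the graded reverse
lexicographic order with `a_1 > ⋯ > a_d > e_1 > ⋯ > e_{2r-2} > b_1 > ⋯ > b_d`, the
initial ideal of the toric ideal `I_{G_{r,d}}` is the monomial ideal generated by
`F_d ∪ H_{r,d} = {a_i b_j : 1 ≤ j < i ≤ d} ∪ {a_i e_2 e_4 ⋯ e_{2r-2} : 1 ≤ i ≤ d}`. -/
theorem initial_ideal_Grd (k : Type) [Field k] (d r : ℕ) (hd : 2 ≤ d) (hr : 3 ≤ r) :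
    initialIdeal (rankGrd d r) (toricIdealGrd k d r) =
      Ideal.span
        ({p | ∃ i j : Fin d, j < i ∧ p = X (EVar.a i) * X (EVar.b j)} ∪
         {p | ∃ i : Fin d, p = X (EVar.a i) * evenEProd k d r}) :=
  initial_ideal_Grd_general k d r hr
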